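/- Let H_1,…,H_k be pairwise non-isomorphic hypergraphs and let c_1,…,c_k be nonzero rational constants. There exist hypergraphs F_1,…,F_k, depending only on H_1,…,H_k and c_1,…,c_k, and an invertible k × k rational matrix M with M_{i,j} = c_j · Hom(F_i, H_j), such that for every hypergraph G, setting G_j = G ⊗ F_j for each j ∈ {1,…,k}, one has Σ_{i=1}^k c_i · Hom(G_j, H_i) = Σ_{i=1}^k M_{j,i} · Hom(G, H_i) for every j; consequently the k numbers Hom(G, H_1),…,Hom(G, H_k) are uniquely determined by the k numbers Σ_{i=1}^k c_i · Hom(G_j, H_i), j = 1,…,k. -/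

import Mathlib

open scoped Classical

noncomputable section

/-- A hypergraph: a finite vertex set and a finite set of hyperedges, with vertices in `ℕ`. -/
structure HGraph where
  verts : Finset ℕ
  edges : Finset (Finset ℕ)

namespace HGraph

/-- Well-formedness: every hyperedge is a nonempty subset of the vertex set. -/
def Good (G : HGraph) : Prop := ∀ e ∈ G.edges, e ⊆ G.verts ∧ e.Nonempty

/-- The rank of a hypergraph: the maximum arity of a hyperedge. -/
def rank (G : HGraph) : ℕ := G.edges.sup Finset.card

/-- The induced `l`-trimmed subhypergraph of `G` on `S`. -/
def trim (G : HGraph) (S : Finset ℕ) (l : ℕ∞) : HGraph :=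
  ⟨G.verts ∩ S,
    (G.edges.filter fun e => ((e \ S).card : ℕ∞) ≤ l ∧ (e ∩ S).Nonempty).image fun e => e ∩ S⟩

/-- The degree of a vertex: the number of hyperedges containing it. -/
def degree (G : HGraph) (v : ℕ) : ℕ := (G.edges.filter fun e => v ∈ e).card

/-- The `l`-degeneracy of a hypergraph: the least `κ` such that every nonempty induced
`l`-trimmed subhypergraph has a vertex of degree at most `κ`. -/
def degeneracy (G : HGraph) (l : ℕ∞) : ℕ :=
  sInf {κ : ℕ | ∀ S ⊆ G.verts, S.Nonempty → ∃ v ∈ S, (G.trim S l).degree v ≤ κ}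

/-- Two vertices are adjacent if some hyperedge contains both. -/
def Adj (G : HGraph) (u v : ℕ) : Prop := ∃ e ∈ G.edges, u ∈ e ∧ v ∈ e

/-- A hypergraph is connected if any two vertices are joined by a path of adjacencies. -/
def Connected (G : HGraph) : Prop :=
  ∀ u ∈ G.verts, ∀ v ∈ G.verts, Relation.ReflTransGen G.Adj u v

/-- `D` is a connected component of `G`. -/
def IsComponent (G : HGraph) (D : Finset ℕ) : Prop :=
  ∃ v ∈ G.verts, D = G.verts.filter fun u => Relation.ReflTransGen G.Adj v u

/-- The induced subhypergraph (only hyperedges entirely inside `S`). -/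
def induce (G : HGraph) (S : Finset ℕ) : HGraph :=
  ⟨G.verts ∩ S, G.edges.filter fun e => e ⊆ S⟩

end HGraph

/-- `f` is a homomorphism from `H` to `G`. -/
def IsHom (H G : HGraph) (f : ℕ → ℕ) : Prop :=
  (∀ v ∈ H.verts, f v ∈ G.verts) ∧ ∀ e ∈ H.edges, e.image f ∈ G.edges

/-- `Hom(G,H)`: the number of homomorphisms from `H` to `G`
(normalized to be `0` off `V(H)` so that the set is finite). -/
def homCount (G H : HGraph) : ℕ :=
  Set.ncard {f : ℕ → ℕ | IsHom H G f ∧ ∀ v ∉ H.verts, f v = 0}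

/-- `Homr(G,H)`: the number of arity-preserving homomorphisms from `H` to `G`. -/
def homrCount (G H : HGraph) : ℕ :=
  Set.ncard {f : ℕ → ℕ | IsHom H G f ∧ (∀ e ∈ H.edges, (e.image f).card = e.card) ∧
    ∀ v ∉ H.verts, f v = 0}

/-- HGraph isomorphism. -/
def Isomorphic (H H' : HGraph) : Prop :=
  ∃ f : ℕ → ℕ, Set.BijOn f ↑H.verts ↑H'.verts ∧
    H'.edges = H.edges.image fun e => e.image f

/-- The quotient of `H` under the partition of `V(H)` into the fibers of `f`. -/
def quotientBy (H : HGraph) (f : ℕ → ℕ) : HGraph :=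
  ⟨H.verts.image f, H.edges.image fun e => e.image f⟩

/-- `H'` is a quotient of `H` (by some partition of `V(H)`). -/
def IsQuotient (H H' : HGraph) : Prop := ∃ f : ℕ → ℕ, H' = quotientBy H f

/-- Each fiber of `f` induces a connected (trimmed) subhypergraph of `H`. -/
def ContractMap (H : HGraph) (f : ℕ → ℕ) : Prop :=
  ∀ w : ℕ, (H.trim (H.verts.filter fun v => f v = w) ⊤).Connected

/-- `H'` belongs to the contract set `Q^c(H)`: it is a quotient of `H` by a partition
all of whose parts induce connected subhypergraphs of `H`. -/
def IsContractQuotient (H H' : HGraph) : Prop :=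
  ∃ f : ℕ → ℕ, ContractMap H f ∧ H' = quotientBy H f

/-- `α(H')`: the number of partitions `τ` of `V(H)` with connected parts with `H/τ ≅ H'`. -/
def alphaCount (H H' : HGraph) : ℕ :=
  Set.ncard {P : Finset (Finset ℕ) | ∃ f : ℕ → ℕ, ContractMap H f ∧
    Isomorphic (quotientBy H f) H' ∧
    P = (H.verts.image f).image fun w => H.verts.filter fun v => f v = w}

/-- `|Aut(H')|`: the number of automorphisms of `H'`. -/
def autCount (H' : HGraph) : ℕ :=
  Set.ncard {f : ℕ → ℕ | (∀ v ∉ H'.verts, f v = v) ∧ Set.BijOn f ↑H'.verts ↑H'.verts ∧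
    H'.edges.image (fun e => e.image f) = H'.edges}

/-- The arc relation of the `l`-skeleton of the DAH obtained by ordering `G` by `π`. -/
def SkelArc (G : HGraph) (π : ℕ → ℕ) (l : ℕ∞) (u v : ℕ) : Prop :=
  ∃ e ∈ G.edges, u ∈ e ∧ v ∈ e ∧ π u < π v ∧
    ((e.filter fun w => π w < π u).card : ℕ∞) ≤ l

/-- The `l`-outdegree of a vertex in the DAH `(G, π)`. -/
def loutdeg (G : HGraph) (π : ℕ → ℕ) (l : ℕ∞) (u : ℕ) : ℕ :=
  (G.verts.filter fun v => SkelArc G π l u v).card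

/-- Vertices reachable from `v` by a directed path. -/
def Reach (Adj : ℕ → ℕ → Prop) (v : ℕ) : Set ℕ := {u | Relation.ReflTransGen Adj v u}

/-- Vertices reachable from a set `A`. -/
def ReachSet (Adj : ℕ → ℕ → Prop) (A : Set ℕ) : Set ℕ :=
  {u | ∃ a ∈ A, Relation.ReflTransGen Adj a u}

/-- The sources of a DAG: vertices with no incoming arc. -/
def sourcesOf (V : Finset ℕ) (Adj : ℕ → ℕ → Prop) : Finset ℕ :=
  V.filter fun v => ¬ ∃ u ∈ V, Adj u v

/-- `b` lies on the (unique) path between `i` and `j` in `T`. -/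
def OnPath {n : ℕ} (T : SimpleGraph (Fin n)) (i j b : Fin n) : Prop :=
  ∃ p : T.Walk i j, p.IsPath ∧ b ∈ p.support

/-- `(T, β)` is a DAG-tree decomposition of the DAG `(V, Adj)`. -/
def IsDTD (V : Finset ℕ) (Adj : ℕ → ℕ → Prop) {n : ℕ}
    (T : SimpleGraph (Fin n)) (β : Fin n → Finset ℕ) : Prop :=
  T.IsTree ∧ (∀ i, β i ⊆ sourcesOf V Adj) ∧ (∀ s ∈ sourcesOf V Adj, ∃ i, s ∈ β i) ∧
    ∀ i j b, OnPath T i j b →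
      ReachSet Adj ↑(β i) ∩ ReachSet Adj ↑(β j) ⊆ ReachSet Adj ↑(β b)

/-- The DAG-treewidth of the DAG `(V, Adj)`. -/
def dagTreewidth (V : Finset ℕ) (Adj : ℕ → ℕ → Prop) : ℕ :=
  sInf {w : ℕ | ∃ (n : ℕ) (T : SimpleGraph (Fin n)) (β : Fin n → Finset ℕ),
    IsDTD V Adj T β ∧ ∀ i, (β i).card ≤ w}

/-- The `l`-DAG-treewidth of the DAH `(H, π)`. -/
def ldtwOriented (H : HGraph) (π : ℕ → ℕ) (l : ℕ∞) : ℕ :=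
  dagTreewidth H.verts (SkelArc H π l)

/-- The `l`-DAG-treewidth of an undirected hypergraph:
the maximum over all acyclic orientations. -/
def ldtw (H : HGraph) (l : ℕ∞) : ℕ :=
  sSup {w : ℕ | ∃ π : ℕ → ℕ, Set.InjOn π ↑H.verts ∧ w = ldtwOriented H π l}

/-- `f` is a DAH homomorphism from `(K, πK)` to `(G, πG)`. -/
def IsDAHHom (K : HGraph) (πK : ℕ → ℕ) (G : HGraph) (πG : ℕ → ℕ)
    (f : ℕ → ℕ) : Prop :=
  (∀ v ∈ K.verts, f v ∈ G.verts) ∧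
    ∀ e ∈ K.edges, e.image f ∈ G.edges ∧
      ∀ u ∈ e, ∀ v ∈ e, πK u < πK v → πG (f u) < πG (f v)

/-- The number of DAH homomorphisms from `(K, πK)` to `(G, πG)`. -/
def dahHomCount (G : HGraph) (πG : ℕ → ℕ) (K : HGraph) (πK : ℕ → ℕ) : ℕ :=
  Set.ncard {f : ℕ → ℕ | IsDAHHom K πK G πG f ∧ ∀ v ∉ K.verts, f v = 0}

/-- Two orderings of `H` give isomorphic acyclic orientations. -/
def OrientIso (H : HGraph) (π₁ π₂ : ℕ → ℕ) : Prop :=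
  ∃ g : ℕ → ℕ, Set.BijOn g ↑H.verts ↑H.verts ∧
    (H.edges.image fun e => e.image g) = H.edges ∧
    ∀ u ∈ H.verts, ∀ v ∈ H.verts, (π₁ u < π₁ v ↔ π₂ (g u) < π₂ (g v))

/-- The vertices of `H` that are `l`-reachable from the set `S` in the DAH `(H, π)`. -/
def reachClosure (H : HGraph) (π : ℕ → ℕ) (l : ℕ∞) (S : Set ℕ) : Finset ℕ :=
  H.verts.filter fun v => v ∈ ReachSet (SkelArc H π l) S

/-- `H⃗[S]_l`: the sub-DAH induced (0-trimmed) on the vertices `l`-reachable from `S`. -/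
def subDAH (H : HGraph) (π : ℕ → ℕ) (l : ℕ∞) (S : Set ℕ) : HGraph :=
  H.trim (reachClosure H π l S) 0

/-- `B'` is a child of `B` in the tree `T` rooted at `root`. -/
def IsChild {n : ℕ} (T : SimpleGraph (Fin n)) (root B B' : Fin n) : Prop :=
  T.Adj B B' ∧ OnPath T root B' B

/-- `Γ(B)`: the union of the bags in the subtree of `T` rooted at `B`. -/
def GammaSet {n : ℕ} (T : SimpleGraph (Fin n)) (root : Fin n)
    (β : Fin n → Finset ℕ) (B : Fin n) : Set ℕ :=
  {s | ∃ i, OnPath T root i B ∧ s ∈ β i}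

/-- `ext(φ, K⃗, G⃗)` relative to the agreement domain `dom`: the number of DAH homomorphisms
from `(K, πK)` to `(G, πG)` that agree with `φ` on `V(K) ∩ dom`. -/
def extCount (K : HGraph) (πK : ℕ → ℕ) (G : HGraph) (πG : ℕ → ℕ)
    (dom : Set ℕ) (φ : ℕ → ℕ) : ℕ :=
  Set.ncard {ψ : ℕ → ℕ | IsDAHHom K πK G πG ψ ∧ (∀ v ∉ K.verts, ψ v = 0) ∧
    ∀ v ∈ (↑K.verts : Set ℕ) ∩ dom, ψ v = φ v}

/-- The hyperedges `E_i` associated to a core `C` and a component `D`. -/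
def obstructionEdges (H : HGraph) (C D : Finset ℕ) : Finset (Finset ℕ) :=
  H.edges.filter fun e => e ⊆ C ∪ D ∧ 1 < e.card

/-- `H` is an `l`-obstruction (a member of `𝓗_l`). -/
def IsLObstruction (l : ℕ∞) (H : HGraph) : Prop :=
  ∃ k, 3 ≤ k ∧ ∃ C ⊆ H.verts, C.card = k ∧
    (∀ e ∈ (H.trim C l).edges, e.card ≤ 1) ∧
    (∀ D : Finset ℕ, (H.trim (H.verts \ C) ⊤).IsComponent D →
      ¬ C ⊆ (obstructionEdges H C D).biUnion id) ∧
    ∃ Dmap : ℕ → Finset ℕ, Set.InjOn Dmap ↑C ∧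
      ∀ c ∈ C, (H.trim (H.verts \ C) ⊤).IsComponent (Dmap c) ∧
        C.erase c ⊆ (obstructionEdges H C (Dmap c)).biUnion id ∧
        ∀ e ∈ obstructionEdges H C (Dmap c), c ∉ e

/-- `H` is `𝓗_l` ITS free: no induced ∞-trimmed subhypergraph is an `l`-obstruction. -/
def ITSFree (l : ℕ∞) (H : HGraph) : Prop :=
  ∀ S ⊆ H.verts, ¬ IsLObstruction l (H.trim S ⊤)

/-- The hypergraph `(Hv, He)` is an `l`-connector of `X ⊆ Hv`. -/
def IsConnector (l : ℕ∞) (Hv : Finset ℕ) (He : Finset (Finset ℕ)) (X : Finset ℕ) : Prop :=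
  X ⊆ Hv ∧ HGraph.Connected ⟨Hv, He⟩ ∧
    (∀ e ∈ He, 2 ≤ (e ∩ X).card → l < ((e \ X).card : ℕ∞)) ∧
    ∃ V' : Finset ℕ, (HGraph.trim ⟨Hv, He⟩ (Hv \ X) ⊤).IsComponent V' ∧
      ∀ xx ∈ X, ∃ v ∈ V', ∃ e ∈ He, xx ∈ e ∧ v ∈ e

/-- Witness data for membership of `H` in `𝓗_{l,k}`. -/
def InHlkWitness (l : ℕ∞) (k : ℕ) (H : HGraph)
    (x : ℕ → ℕ) (Vp : ℕ → Finset ℕ) (Ep : ℕ → Finset (Finset ℕ)) : Prop :=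
  Set.InjOn x ↑(Finset.range k) ∧
  (∀ i < k, ∀ j < k, i ≠ j → Disjoint (Vp i) (Vp j)) ∧
  (∀ i < k, Disjoint (Vp i) ((Finset.range k).image x)) ∧
  H.verts = (Finset.range k).image x ∪ (Finset.range k).biUnion Vp ∧
  (∀ i < k, ∀ j < k, i ≠ j → Disjoint (Ep i) (Ep j)) ∧
  H.edges = (Finset.range k).biUnion Ep ∧
  ∀ i < k,
    (∀ e ∈ Ep i, e ⊆ Vp i ∪ (((Finset.range k).image x).erase (x i))) ∧
    IsConnector l (Vp i ∪ (((Finset.range k).image x).erase (x i))) (Ep i)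
      (((Finset.range k).image x).erase (x i))

/-- `H ∈ 𝓗_{l,k}`. -/
def InHlk (l : ℕ∞) (k : ℕ) (H : HGraph) : Prop :=
  ∃ x Vp Ep, InHlkWitness l k H x Vp Ep

/-- The DAG `(V, Adj)` contains a `k`-reachable-cycle. -/
def HasReachCycle (V : Finset ℕ) (Adj : ℕ → ℕ → Prop) (k : ℕ) : Prop :=
  ∃ x y : ZMod k → ℕ, Function.Injective x ∧ Function.Injective y ∧
    (∀ i, x i ∈ V) ∧ (∀ i, y i ∈ V) ∧
    (∀ i, x i ∈ Reach Adj (y i) ∧ x (i + 1) ∈ Reach Adj (y i)) ∧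
    ∀ v ∈ V, 2 ≤ (Set.range x ∩ Reach Adj v).ncard →
      ∃ i, Set.range x ∩ Reach Adj v = {x i, x (i + 1)}

/-- `(x, y)` form a `k`-reachable-simplex in the DAG `(V, Adj)`. -/
def IsReachSimplexPair (V : Finset ℕ) (Adj : ℕ → ℕ → Prop) {k : ℕ}
    (x y : Fin k → ℕ) : Prop :=
  Function.Injective x ∧ Function.Injective y ∧
    (∀ i, x i ∈ V) ∧ (∀ i, y i ∈ V) ∧
    (∀ i j, j ≠ i → x j ∈ Reach Adj (y i)) ∧
    ¬ ∃ v ∈ V, ∀ i, x i ∈ Reach Adj v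

/-- The DAG `(V, Adj)` contains a `k`-reachable-simplex. -/
def HasReachSimplex (V : Finset ℕ) (Adj : ℕ → ℕ → Prop) (k : ℕ) : Prop :=
  ∃ x y : Fin k → ℕ, IsReachSimplexPair V Adj x y

/-- `F` is α-acyclic. -/
def IsAlphaAcyclic (F : HGraph) : Prop :=
  ∃ (n : ℕ) (T : SimpleGraph (Fin n)) (f : Fin n → Finset ℕ),
    T.IsTree ∧ Function.Injective f ∧ (∀ i, f i ∈ F.edges) ∧
    (∀ e ∈ F.edges, ∃ i, f i = e) ∧
    ∀ i j b, OnPath T i j b → f i ∩ f j ⊆ f b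

/-- The reachability hypergraph of the DAG `(V, Adj)`. -/
def reachHypergraph (V : Finset ℕ) (Adj : ℕ → ℕ → Prop) : HGraph :=
  ⟨V, (sourcesOf V Adj).image fun s => V.filter fun v => v ∈ Reach Adj s⟩

/-- The clique completion of a hypergraph. -/
def cliqueCompletion (H : HGraph) : SimpleGraph ℕ where
  Adj u v := u ≠ v ∧ ∃ e ∈ H.edges, u ∈ e ∧ v ∈ e
  symm := by
    constructor
    intro u v h
    obtain ⟨huv, e, he, hu, hv⟩ := h
    exact ⟨huv.symm, e, he, hv, hu⟩
  loopless := by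
    constructor
    intro u h
    exact h.1 rfl

/-- `G` has an induced cycle on `n` vertices. -/
def HasInducedCycle (G : SimpleGraph ℕ) (n : ℕ) : Prop :=
  ∃ f : ZMod n → ℕ, Function.Injective f ∧
    ∀ i j : ZMod n, G.Adj (f i) (f j) ↔ (j = i + 1 ∨ i = j + 1)

/-- The number of colorful homomorphisms from `H` to `G` under the coloring `c`
(with color set `{1, …, |V(H)|}`). -/
def colHomCount (G H : HGraph) (c : ℕ → ℕ) : ℕ :=
  Set.ncard {f : ℕ → ℕ | IsHom H G f ∧ (∀ v ∉ H.verts, f v = 0) ∧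
    Set.BijOn (fun v => c (f v)) ↑H.verts ↑(Finset.Icc 1 H.verts.card)}

/-- The tensor product of hypergraphs (vertex pairs encoded by `Nat.pair`). -/
def tensor (G H : HGraph) : HGraph :=
  ⟨(G.verts ×ˢ H.verts).image fun p => Nat.pair p.1 p.2,
    ((G.verts ×ˢ H.verts).image fun p => Nat.pair p.1 p.2).powerset.filter fun e =>
      (e.image fun m => (Nat.unpair m).1) ∈ G.edges ∧
      (e.image fun m => (Nat.unpair m).2) ∈ H.edges⟩

/-- `Sub(G,H)`: the number of subhypergraphs of `G` isomorphic to `H`. -/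
def subCount (G H : HGraph) : ℕ :=
  Set.ncard {p : Finset ℕ × Finset (Finset ℕ) |
    p.1 ⊆ G.verts ∧ (∀ e ∈ p.2, e ∈ G.edges ∧ e ⊆ p.1) ∧ Isomorphic H ⟨p.1, p.2⟩}

/-- Vertex renaming used in the construction of `G^H_l`:
core vertices go to the matching vertex of the colorful hyperedge `e` of `G`,
vertices of `H'` outside the core go to their fresh copy indexed by `e`, and
vertices outside `H'` go to their unique copy. -/
def liftVert (S X : Finset ℕ) (π c : ℕ → ℕ) (e : Finset ℕ) (v : ℕ) : ℕ :=
  if v ∈ X then Nat.pair 0 ((e.filter fun u => c u = π v).sum id)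
  else if v ∈ S then Nat.pair 2 (Nat.pair (Encodable.encode e) v)
  else Nat.pair 1 v

/-- The hypergraph `G^H_l` from the hardness construction. -/
def GHl (H G : HGraph) (S X : Finset ℕ) (Vp : ℕ → Finset ℕ) (π c : ℕ → ℕ)
    (k : ℕ) : HGraph :=
  ⟨(G.verts.image fun v => Nat.pair 0 v) ∪ ((H.verts \ S).image fun v => Nat.pair 1 v) ∪
      (Finset.range k).biUnion fun i =>
        (G.edges.filter fun e => e.card = k - 1 ∧ e.image c = (Finset.range k).erase i).biUnion
          fun e => (Vp i).image fun v => Nat.pair 2 (Nat.pair (Encodable.encode e) v),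
    ((H.edges.filter fun e => e ⊆ H.verts \ S).image fun e => e.image fun v => Nat.pair 1 v) ∪
      (Finset.range k).biUnion fun i =>
        (G.edges.filter fun e => e.card = k - 1 ∧ e.image c = (Finset.range k).erase i).biUnion
          fun e =>
            (H.edges.filter fun e' => ¬ e' ⊆ H.verts \ S ∧
                e' ⊆ X ∪ Vp i ∪ (H.verts \ S)).image
              fun e' => e'.image (liftVert S X π c e)⟩

/-- The coloring of `G^H_l`. -/
def GHlColor (π c : ℕ → ℕ) (m : ℕ) : ℕ :=
  if (Nat.unpair m).1 = 0 then c (Nat.unpair m).2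
  else if (Nat.unpair m).1 = 1 then π (Nat.unpair m).2
  else π (Nat.unpair (Nat.unpair m).2).2

/-- The grouping of the vertices of `G^H_l`: copied vertices first,
then the vertices of `G`, then the vertices of `V^ext`. -/
def GHlGroup (m : ℕ) : ℕ :=
  if (Nat.unpair m).1 = 2 then 0 else if (Nat.unpair m).1 = 0 then 1 else 2

/-!
`Hom(·, H)` is multiplicative under `⊗`, since homomorphisms into `G ⊗ F` are pairs of
homomorphisms into `G` and into `F`. By Lovász's argument (Möbius inversion over induced
subhypergraphs recovers surjective homomorphism counts, and surjections in both directions give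
an isomorphism), pairwise non-isomorphic `H₁, …, Hₖ` have pairwise distinct functions
`Hom(·, Hᵢ)`. These are then distinct characters of the free monoid on hypergraphs, hence
linearly independent, so some `F₁, …, Fₖ` make the matrix `(Hom(Fⱼ, Hᵢ))` invertible. Then
`M = (Hom(Fⱼ, Hᵢ)) · diag(c)` is invertible, and multiplicativity turns
`Σᵢ cᵢ Hom(G ⊗ Fⱼ, Hᵢ)` into `(M · (Hom(G, Hᵢ))ᵢ)ⱼ`.
-/

def homSet (G H : HGraph) : Set (ℕ → ℕ) := {f | IsHom H G f ∧ ∀ v ∉ H.verts, f v = 0}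

lemma homCount_eq_ncard_homSet (G H : HGraph) : homCount G H = (homSet G H).ncard := rfl

lemma homSet_finite (G H : HGraph) : (homSet G H).Finite := by
  let extend (g : H.verts → G.verts) (v : ℕ) : ℕ := if hv : v ∈ H.verts then g ⟨v, hv⟩ else 0
  refine (Set.finite_range extend).subset fun f hf => ⟨fun v => ⟨f v, hf.1.1 v v.2⟩, ?_⟩
  funext v
  by_cases hv : v ∈ H.verts
  · simp [extend, hv]
  · simp [extend, hv, hf.2 v hv]

lemma IsHom.comp {H K G : HGraph} {f φ : ℕ → ℕ} (hφ : IsHom K G φ) (hf : IsHom H K f) :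
    IsHom H G (φ ∘ f) :=
  ⟨fun v hv => hφ.1 _ (hf.1 v hv), fun e he => by
    rw [← Finset.image_image]; exact hφ.2 _ (hf.2 e he)⟩

namespace HGraph

lemma Good.tensor {G : HGraph} (hG : G.Good) (F : HGraph) : (tensor G F).Good := by
  intro e he
  simp only [_root_.tensor, Finset.mem_filter, Finset.mem_powerset] at he
  exact ⟨he.1, Finset.image_nonempty.1 (hG _ he.2.1).2⟩

end HGraph

lemma mem_tensor_verts {G F : HGraph} {m : ℕ} :
    m ∈ (tensor G F).verts ↔ m.unpair.1 ∈ G.verts ∧ m.unpair.2 ∈ F.verts := by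
  constructor
  · simp only [tensor, Finset.mem_image, Finset.mem_product]
    rintro ⟨p, hp, rfl⟩
    simpa using hp
  · intro h
    exact Finset.mem_image.2 ⟨m.unpair, Finset.mem_product.2 h, Nat.pair_unpair m⟩

lemma isHom_tensor_fst (G F : HGraph) : IsHom (tensor G F) G fun m => m.unpair.1 :=
  ⟨fun _ hm => (mem_tensor_verts.1 hm).1, fun _ he => (Finset.mem_filter.1 he).2.1⟩

lemma isHom_tensor_snd (G F : HGraph) : IsHom (tensor G F) F fun m => m.unpair.2 :=
  ⟨fun _ hm => (mem_tensor_verts.1 hm).2, fun _ he => (Finset.mem_filter.1 he).2.2⟩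

lemma isHom_tensor_pair {H G F : HGraph} (hH : H.Good) {f₁ f₂ : ℕ → ℕ}
    (h₁ : IsHom H G f₁) (h₂ : IsHom H F f₂) :
    IsHom H (tensor G F) fun v => Nat.pair (f₁ v) (f₂ v) := by
  have hverts : ∀ v ∈ H.verts, Nat.pair (f₁ v) (f₂ v) ∈ (tensor G F).verts := fun v hv =>
    mem_tensor_verts.2 (by simpa using ⟨h₁.1 v hv, h₂.1 v hv⟩)
  refine ⟨hverts, fun e he => Finset.mem_filter.2 ⟨?_, ?_, ?_⟩⟩
  · exact Finset.mem_powerset.2 fun m hm => by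
      obtain ⟨v, hv, rfl⟩ := Finset.mem_image.1 hm
      exact hverts v ((hH e he).1 hv)
  · simpa [Finset.image_image, Function.comp_def] using h₁.2 e he
  · simpa [Finset.image_image, Function.comp_def] using h₂.2 e he

lemma homSet_tensor {G F H : HGraph} (hH : H.Good) :
    homSet (tensor G F) H =
      (fun p : (ℕ → ℕ) × (ℕ → ℕ) => fun v => Nat.pair (p.1 v) (p.2 v)) ''
        (homSet G H ×ˢ homSet F H) := by
  ext f
  constructor
  · rintro ⟨hf, hf0⟩
    refine ⟨((fun m => m.unpair.1) ∘ f, (fun m => m.unpair.2) ∘ f), ⟨?_, ?_⟩, ?_⟩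
    · exact ⟨(isHom_tensor_fst G F).comp hf, fun v hv => by simp [hf0 v hv]⟩
    · exact ⟨(isHom_tensor_snd G F).comp hf, fun v hv => by simp [hf0 v hv]⟩
    · funext v; simp
  · rintro ⟨⟨f₁, f₂⟩, ⟨⟨hf₁, hf₁0⟩, ⟨hf₂, hf₂0⟩⟩, rfl⟩
    refine ⟨isHom_tensor_pair hH hf₁ hf₂, fun v hv => ?_⟩
    have h₁ : f₁ v = 0 := hf₁0 v hv
    have h₂ : f₂ v = 0 := hf₂0 v hv
    simp only [h₁, h₂]
    rfl

theorem homCount_tensor (G F : HGraph) {H : HGraph} (hH : H.Good) :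
    homCount (tensor G F) H = homCount G H * homCount F H := by
  rw [homCount_eq_ncard_homSet, homSet_tensor hH, Set.ncard_image_of_injective, Set.ncard_prod]
  · rfl
  intro p q hpq
  have hpair v := Nat.pair_eq_pair.1 (congrFun hpq v)
  exact Prod.ext (funext fun v => (hpair v).1) (funext fun v => (hpair v).2)

namespace HGraph

lemma Good.induce {G : HGraph} (hG : G.Good) (S : Finset ℕ) : (G.induce S).Good := fun e he =>
  have he := Finset.mem_filter.1 he
  ⟨Finset.subset_inter (hG e he.1).1 he.2, (hG e he.1).2⟩

lemma Good.induce_verts {G : HGraph} (hG : G.Good) : G.induce G.verts = G := by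
  have hedges : G.edges.filter (· ⊆ G.verts) = G.edges :=
    Finset.filter_true_of_mem fun e he => (hG e he).1
  simp only [HGraph.induce, Finset.inter_self, hedges]

end HGraph

def surjHomSet (G H : HGraph) : Set (ℕ → ℕ) := {f ∈ homSet G H | H.verts.image f = G.verts}

def surjHomCount (G H : HGraph) : ℕ := (surjHomSet G H).ncard

lemma surjHomSet_finite (G H : HGraph) : (surjHomSet G H).Finite :=
  (homSet_finite G H).subset fun _ hf => hf.1

lemma surjHomSet_induce {G H : HGraph} (hH : H.Good) {S : Finset ℕ} (hS : S ⊆ G.verts) :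
    surjHomSet (G.induce S) H = {f ∈ homSet G H | H.verts.image f = S} := by
  have hverts : (G.induce S).verts = S := Finset.inter_eq_right.2 hS
  ext f
  simp only [surjHomSet, homSet, IsHom, Set.mem_ofPred_eq, hverts]
  constructor
  · rintro ⟨⟨⟨hv, he⟩, hf0⟩, him⟩
    exact ⟨⟨⟨fun v hvH => hS (hv v hvH), fun e heH => (Finset.mem_filter.1 (he e heH)).1⟩,
      hf0⟩, him⟩
  · rintro ⟨⟨⟨hv, he⟩, hf0⟩, him⟩
    refine ⟨⟨⟨fun v hvH => him ▸ Finset.mem_image_of_mem f hvH, fun e heH => ?_⟩, hf0⟩, him⟩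
    exact Finset.mem_filter.2 ⟨he e heH, him ▸ Finset.image_subset_image (hH e heH).1⟩

lemma homCount_eq_sum_surjHomCount (G : HGraph) {H : HGraph} (hH : H.Good) :
    homCount G H = ∑ S ∈ G.verts.powerset, surjHomCount (G.induce S) H := by
  have hmaps : Set.MapsTo (fun f : ℕ → ℕ => H.verts.image f)
      ((homSet_finite G H).toFinset : Set (ℕ → ℕ)) (G.verts.powerset : Set (Finset ℕ)) :=
    fun f hf => by
      simp only [Set.Finite.coe_toFinset] at hf
      exact Finset.mem_powerset.2 (Finset.image_subset_iff.2 hf.1.1)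
  rw [homCount_eq_ncard_homSet, Set.ncard_eq_toFinset_card _ (homSet_finite G H),
    Finset.card_eq_sum_card_fiberwise hmaps]
  refine Finset.sum_congr rfl fun S hS => ?_
  rw [surjHomCount, surjHomSet_induce hH (Finset.mem_powerset.1 hS), ← Set.ncard_coe_finset]
  congr 1
  ext f
  simp

/-- By strong induction on `|V(G)|`: `Hom(G, H)` is `Surj(G, H)` plus the surjective counts
of the proper induced subhypergraphs of `G`. -/
lemma surjHomCount_eq_of_homCount_eq {H₁ H₂ : HGraph} (h₁ : H₁.Good) (h₂ : H₂.Good)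
    (hyp : ∀ G : HGraph, G.Good → homCount G H₁ = homCount G H₂) {G : HGraph} (hG : G.Good) :
    surjHomCount G H₁ = surjHomCount G H₂ := by
  induction hn : G.verts.card using Nat.strong_induction_on generalizing G with
  | _ n ih =>
    have hsplit (H : HGraph) (hH : H.Good) : homCount G H = surjHomCount G H +
        ∑ S ∈ G.verts.powerset.erase G.verts, surjHomCount (G.induce S) H := by
      rw [homCount_eq_sum_surjHomCount G hH,
        ← Finset.add_sum_erase _ _ (Finset.mem_powerset_self G.verts), hG.induce_verts]
    have hproper : ∑ S ∈ G.verts.powerset.erase G.verts, surjHomCount (G.induce S) H₁ =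
        ∑ S ∈ G.verts.powerset.erase G.verts, surjHomCount (G.induce S) H₂ := by
      refine Finset.sum_congr rfl fun S hS => ?_
      obtain ⟨hne, hsub⟩ := Finset.mem_erase.1 hS
      have hlt : (G.induce S).verts.card < n := by
        rw [← hn, HGraph.induce, Finset.inter_eq_right.2 (Finset.mem_powerset.1 hsub)]
        exact Finset.card_lt_card (Finset.ssubset_iff_subset_ne.2 ⟨Finset.mem_powerset.1 hsub, hne⟩)
      exact ih _ hlt (hG.induce S) rfl
    have := hyp G hG
    rwa [hsplit H₁ h₁, hsplit H₂ h₂, hproper, Nat.add_right_cancel_iff] at this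

lemma surjHomSet_self_nonempty {H : HGraph} (hH : H.Good) : (surjHomSet H H).Nonempty := by
  let f (v : ℕ) : ℕ := if v ∈ H.verts then v else 0
  have himage {e : Finset ℕ} (he : e ⊆ H.verts) : e.image f = e := by
    conv_rhs => rw [← Finset.image_id (s := e)]
    exact Finset.image_congr fun v hv => if_pos (he hv)
  refine ⟨f, ⟨⟨fun v hv => ?_, fun e he => ?_⟩, fun v hv => if_neg hv⟩, himage subset_rfl⟩
  · simp [f, hv]
  · rwa [himage (hH e he).1]

lemma surjHomCount_self_pos {H : HGraph} (hH : H.Good) : 0 < surjHomCount H H :=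
  (Set.ncard_pos (surjHomSet_finite H H)).2 (surjHomSet_self_nonempty hH)

lemma injOn_of_mem_surjHomSet {G H : HGraph} {f : ℕ → ℕ} (hf : f ∈ surjHomSet G H)
    (hcard : H.verts.card ≤ G.verts.card) : Set.InjOn f H.verts :=
  Finset.injOn_of_card_image_eq (le_antisymm Finset.card_image_le (hf.2 ▸ hcard))

lemma injOn_image_edges {H : HGraph} (hH : H.Good) {f : ℕ → ℕ} (hf : Set.InjOn f H.verts) :
    Set.InjOn (fun e : Finset ℕ => e.image f) ↑H.edges := fun e he e' he' hee' => by
  have := (hf.image_eq_image_iff (hH e he).1 (hH e' he').1).1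
  exact_mod_cast this (by exact_mod_cast hee')

lemma card_edges_le_of_injOn {G H : HGraph} (hH : H.Good) {f : ℕ → ℕ} (hf : IsHom H G f)
    (hinj : Set.InjOn f H.verts) : H.edges.card ≤ G.edges.card :=
  Finset.card_le_card_of_injOn _ hf.2 (injOn_image_edges hH hinj)

/-- Surjective homomorphisms in both directions force `|V|` and then `|E|` to agree,
so either one is an isomorphism. -/
lemma isomorphic_of_surjHomSet_nonempty {H₁ H₂ : HGraph} (h₁ : H₁.Good) (h₂ : H₂.Good)
    {f g : ℕ → ℕ} (hf : f ∈ surjHomSet H₁ H₂) (hg : g ∈ surjHomSet H₂ H₁) :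
    Isomorphic H₁ H₂ := by
  have hcard : H₁.verts.card = H₂.verts.card := le_antisymm
    (hf.2 ▸ Finset.card_image_le) (hg.2 ▸ Finset.card_image_le)
  have hginj := injOn_of_mem_surjHomSet hg hcard.le
  have hfinj := injOn_of_mem_surjHomSet hf hcard.ge
  refine ⟨g, ?_, ?_⟩
  · rw [← hg.2, Finset.coe_image]
    exact hginj.bijOn_image
  · refine (Finset.eq_of_subset_of_card_le (Finset.image_subset_iff.2 hg.1.1.2) ?_).symm
    rw [Finset.card_image_of_injOn (injOn_image_edges h₁ hginj)]
    exact card_edges_le_of_injOn h₂ hf.1.1 hfinj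

theorem isomorphic_of_homCount_eq {H₁ H₂ : HGraph} (h₁ : H₁.Good) (h₂ : H₂.Good)
    (hyp : ∀ G : HGraph, G.Good → homCount G H₁ = homCount G H₂) : Isomorphic H₁ H₂ := by
  have hsurj {G : HGraph} (hG : G.Good) := surjHomCount_eq_of_homCount_eq h₁ h₂ hyp hG
  have h₂₁ : 0 < surjHomCount H₁ H₂ := hsurj h₁ ▸ surjHomCount_self_pos h₁
  have h₁₂ : 0 < surjHomCount H₂ H₁ := (hsurj h₂).symm ▸ surjHomCount_self_pos h₂
  obtain ⟨f, hf⟩ := (Set.ncard_pos (surjHomSet_finite _ _)).1 h₂₁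
  obtain ⟨g, hg⟩ := (Set.ncard_pos (surjHomSet_finite _ _)).1 h₁₂
  exact isomorphic_of_surjHomSet_nonempty h₁ h₂ hf hg

def loopPoint : HGraph := ⟨{0}, {{0}}⟩

lemma loopPoint_good : loopPoint.Good := fun e he => by
  rw [Finset.mem_singleton.1 he]
  exact ⟨subset_rfl, Finset.singleton_nonempty 0⟩

lemma homCount_loopPoint {H : HGraph} (hH : H.Good) : homCount loopPoint H = 1 := by
  rw [homCount_eq_ncard_homSet, Set.ncard_eq_one]
  refine ⟨0, Set.eq_singleton_iff_unique_mem.2 ⟨⟨⟨fun _ _ => Finset.mem_singleton_self 0,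
    fun e he => ?_⟩, fun _ _ => rfl⟩, fun f hf => funext fun v => ?_⟩⟩
  · exact (Finset.image_const (hH e he).2 0).symm ▸ Finset.mem_singleton_self _
  · by_cases hv : v ∈ H.verts
    · exact Finset.mem_singleton.1 (hf.1.1 v hv)
    · exact hf.2 v hv

def tensorList : List {F : HGraph // F.Good} → HGraph
  | [] => loopPoint
  | F :: l => tensor F.1 (tensorList l)

lemma tensorList_good : ∀ l, (tensorList l).Good
  | [] => loopPoint_good
  | F :: _ => F.2.tensor _

lemma homCount_tensorList {H : HGraph} (hH : H.Good) :
    ∀ l, homCount (tensorList l) H = (l.map fun F => homCount F.1 H).prod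
  | [] => homCount_loopPoint hH
  | F :: l => by
    rw [tensorList, homCount_tensor _ _ hH, homCount_tensorList hH l, List.map_cons,
      List.prod_cons]

/-- Since `Hom(·, H)` is multiplicative under `tensor`, words of the free monoid stand in for
their tensor products (`homChar_apply`), and Dedekind's lemma on characters applies. -/
def homChar (H : HGraph) : FreeMonoid {F : HGraph // F.Good} →* ℚ :=
  FreeMonoid.lift fun F => (homCount F.1 H : ℚ)

lemma homChar_apply {H : HGraph} (hH : H.Good) (w : FreeMonoid {F : HGraph // F.Good}) :
    homChar H w = homCount (tensorList w.toList) H := by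
  simp [homChar, FreeMonoid.lift_apply, homCount_tensorList hH, Function.comp_def]

lemma linearIndependent_homChar {k : ℕ} {Hs : Fin k → HGraph} (hHs : ∀ i, (Hs i).Good)
    (hiso : ∀ i j, i ≠ j → ¬ Isomorphic (Hs i) (Hs j)) :
    LinearIndependent ℚ fun i => ⇑(homChar (Hs i)) := by
  refine (linearIndependent_monoidHom _ ℚ).comp (fun i => homChar (Hs i)) fun i j hij => ?_
  by_contra hne
  refine hiso i j hne (isomorphic_of_homCount_eq (hHs i) (hHs j) fun G hG => ?_)
  have := DFunLike.congr_fun hij (FreeMonoid.of ⟨G, hG⟩)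
  simp only [homChar, FreeMonoid.lift_eval_of] at this
  exact_mod_cast this

theorem exists_isUnit_of_linearIndependent {X K : Type*} [Field K] {k : ℕ}
    {χ : Fin k → X → K} (hχ : LinearIndependent K χ) :
    ∃ x : Fin k → X, IsUnit (Matrix.of fun j i => χ i (x j)) := by
  set v : X → Fin k → K := fun x i => χ i x
  have hspan : Submodule.span K (Set.range v) = ⊤ := by
    rw [← Submodule.dualAnnihilator_eq_bot_iff, eq_bot_iff]
    intro φ hφ
    set a : Fin k → K := fun i => φ fun j => if i = j then 1 else 0
    have hrel : ∑ i, a i • χ i = 0 := funext fun x => by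
      have := (Submodule.mem_dualAnnihilator φ).1 hφ (v x) (Submodule.subset_span ⟨x, rfl⟩)
      rw [φ.pi_apply_eq_sum_univ] at this
      simpa [v, a, mul_comm] using this
    have ha := Fintype.linearIndependent_iff.1 hχ _ hrel
    refine (Submodule.mem_bot K).2 (LinearMap.pi_ext' fun i => LinearMap.ext_ring ?_)
    have hsingle : (Pi.single i 1 : Fin k → K) = fun j => if i = j then 1 else 0 := by
      funext j; simp [Pi.single_apply, eq_comm]
    simpa [a, hsingle] using ha i
  obtain ⟨κ, a, -, haspan, hali⟩ := exists_linearIndependent' K v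
  rw [hspan] at haspan
  let e : κ ≃ Fin k := (Module.Basis.mk hali haspan.ge).indexEquiv (Pi.basisFun K (Fin k))
  exact ⟨a ∘ e.symm,
    Matrix.linearIndependent_rows_iff_isUnit.1 (hali.comp e.symm e.symm.injective)⟩

theorem stmt18 (k : ℕ) (Hs : Fin k → HGraph) (hHs : ∀ i, (Hs i).Good)
    (hiso : ∀ i j, i ≠ j → ¬ Isomorphic (Hs i) (Hs j))
    (c : Fin k → ℚ) (hc : ∀ i, c i ≠ 0) :
    ∃ (F : Fin k → HGraph) (M : Matrix (Fin k) (Fin k) ℚ),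
      (∀ i, (F i).Good) ∧ IsUnit M ∧
      (∀ i j, M i j = c j * (homCount (F i) (Hs j) : ℚ)) ∧
      (∀ G : HGraph, G.Good → ∀ j,
        ∑ i, c i * (homCount (tensor G (F j)) (Hs i) : ℚ) =
          ∑ i, M j i * (homCount G (Hs i) : ℚ)) ∧
      ∀ G G' : HGraph, G.Good → G'.Good →
        (∀ j, ∑ i, c i * (homCount (tensor G (F j)) (Hs i) : ℚ) =
              ∑ i, c i * (homCount (tensor G' (F j)) (Hs i) : ℚ)) →
        ∀ i, homCount G (Hs i) = homCount G' (Hs i) := by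
  obtain ⟨w, hA⟩ := exists_isUnit_of_linearIndependent (linearIndependent_homChar hHs hiso)
  set F : Fin k → HGraph := fun j => tensorList (w j).toList
  set M : Matrix (Fin k) (Fin k) ℚ := Matrix.of fun j i => c i * homCount (F j) (Hs i)
  have hM : M = Matrix.of (fun j i => homChar (Hs i) (w j)) * Matrix.diagonal c := by
    ext j i
    simp [M, F, Matrix.mul_diagonal, homChar_apply (hHs i), mul_comm]
  have hMunit : IsUnit M := hM ▸ hA.mul <| (Matrix.isUnit_diagonal).2 <|
    Pi.isUnit_iff.2 fun i => (hc i).isUnit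
  have hkey (G : HGraph) (j : Fin k) : ∑ i, c i * (homCount (tensor G (F j)) (Hs i) : ℚ) =
      ∑ i, M j i * (homCount G (Hs i) : ℚ) :=
    Finset.sum_congr rfl fun i _ => by
      simp only [M, Matrix.of_apply, homCount_tensor _ _ (hHs i), Nat.cast_mul]
      ring
  refine ⟨F, M, fun j => tensorList_good _, hMunit, fun _ _ => rfl, fun G _ => hkey G,
    fun G G' _ _ heq i => ?_⟩
  have hvec : M.mulVec (fun i => (homCount G (Hs i) : ℚ)) =
      M.mulVec (fun i => (homCount G' (Hs i) : ℚ)) :=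
    funext fun j => by simp only [Matrix.mulVec, dotProduct, ← hkey, heq j]
  exact_mod_cast congrFun (Matrix.mulVec_injective_iff_isUnit.2 hMunit hvec) i

end
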